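/- For every n ≥ 1 and every complex (or real) z, the probability generating function vector of the occupancy count satisfies H(n,z) = (B + zA)^n · 1, where H(n,z) is the column vector with entries H_i(n,z) = Σ_{k=0}^n g_i(n,k) z^k and 1 is the all-ones column vector; equivalently, H(n,z) = (B + zA) H(n-1,z) for n ≥ 2 with H(1,z) = (B + zA)·1. -/

import Mathlib

open Matrix Finset

/-- Probability of a path of a Markov chain with transition matrix `P`. -/
noncomputable def pathProb {S : Type*} [Fintype S] (P : Matrix S S ℝ) (n : ℕ)
    (x : Fin (n + 1) → S) : ℝ :=
  ∏ m : Fin n, P (x m.castSucc) (x m.succ)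

/-- Number of indices `1 ≤ m ≤ n` with `X_m ∈ U`. -/
def occCount {S : Type*} [Fintype S] [DecidableEq S] (U : Finset S) (n : ℕ)
    (x : Fin (n + 1) → S) : ℕ :=
  (Finset.univ.filter (fun m : Fin n => x m.succ ∈ U)).card

/-- `occProb P U i n k = Pr(N_n = k | X_0 = i)`. -/
noncomputable def occProb {S : Type*} [Fintype S] [DecidableEq S]
    (P : Matrix S S ℝ) (U : Finset S) (i : S) (n k : ℕ) : ℝ :=
  ∑ x ∈ Finset.univ.filter
      (fun x : Fin (n + 1) → S => x 0 = i ∧ occCount U n x = k),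
    pathProb P n x

/-!
The factor `z ^ N_n` splits along a path into one factor per step, `z` for a step into `U` and
`1` otherwise, so `Pr(path) * z ^ N_n` is the product of the entries of `B + z • A` along the
path. Summing such products over all paths of length `n` from `i` is the `i`-th entry of
`(B + z • A) ^ n *ᵥ 1`.
-/

section Tuples

variable {α M : Type*} [Fintype α] [AddCommMonoid M] {n : ℕ}

lemma sum_univ_fun_fin_succ (g : (Fin (n + 1) → α) → M) :
    ∑ x, g x = ∑ j, ∑ y : Fin n → α, g (Fin.cons j y) := by
  rw [← (Fin.consEquiv fun _ => α).sum_comp, Fintype.sum_prod_type]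
  rfl

lemma sum_filter_apply_zero_eq_sum_cons [DecidableEq α] (i : α) (g : (Fin (n + 1) → α) → M) :
    ∑ x ∈ univ.filter (fun x : Fin (n + 1) → α => x 0 = i), g x =
      ∑ y : Fin n → α, g (Fin.cons i y) := by
  rw [sum_filter, sum_univ_fun_fin_succ]
  simp

end Tuples

section Paths

variable {S : Type*} [Fintype S]

lemma pathProb_cons (M : Matrix S S ℝ) (n : ℕ) (i : S) (y : Fin (n + 1) → S) :
    pathProb M (n + 1) (Fin.cons i y) = M i (y 0) * pathProb M n y := by
  rw [pathProb, Fin.prod_univ_succ]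
  rfl

lemma sum_pathProb_cons_eq_pow_mulVec [DecidableEq S] (M : Matrix S S ℝ) (n : ℕ) (i : S) :
    ∑ y : Fin n → S, pathProb M n (Fin.cons i y) = (M ^ n *ᵥ fun _ => 1) i := by
  induction n generalizing i with
  | zero => simp [pathProb]
  | succ n ih =>
    calc ∑ y : Fin (n + 1) → S, pathProb M (n + 1) (Fin.cons i y)
        = ∑ j, M i j * ∑ w : Fin n → S, pathProb M n (Fin.cons j w) := by
          simp only [pathProb_cons, sum_univ_fun_fin_succ, Fin.cons_zero, mul_sum]
      _ = (M ^ (n + 1) *ᵥ fun _ => 1) i := by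
          simp only [ih, pow_succ', ← mulVec_mulVec]
          rfl

end Paths

section Occupation

variable {S : Type*} [Fintype S] [DecidableEq S]

lemma occCount_le (U : Finset S) (n : ℕ) (x : Fin (n + 1) → S) : occCount U n x ≤ n :=
  (card_filter_le _ _).trans_eq (card_fin n)

lemma pathProb_mul_pow_occCount (P : Matrix S S ℝ) (U : Finset S) (z : ℝ) (n : ℕ)
    (x : Fin (n + 1) → S) :
    pathProb P n x * z ^ occCount U n x =
      pathProb (of fun i j => P i j * if j ∈ U then z else 1) n x := by
  rw [occCount, ← prod_const, prod_filter, pathProb, pathProb, ← prod_mul_distrib]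
  rfl

lemma sum_occProb_mul_pow (P : Matrix S S ℝ) (U : Finset S) (z : ℝ) (n : ℕ) (i : S) :
    ∑ k ∈ range (n + 1), occProb P U i n k * z ^ k =
      ∑ x ∈ univ.filter (fun x : Fin (n + 1) → S => x 0 = i),
        pathProb P n x * z ^ occCount U n x := by
  rw [← sum_fiberwise_of_maps_to (g := occCount U n) (t := range (n + 1))
    fun x _ => mem_range_succ_iff.mpr (occCount_le U n x)]
  refine sum_congr rfl fun k _ => ?_
  rw [occProb, sum_mul, filter_filter]
  exact sum_congr rfl fun x hx => by rw [(mem_filter.mp hx).2.2]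

end Occupation

theorem stmt16_general {S : Type*} [Fintype S] [DecidableEq S]
    (P : Matrix S S ℝ)
    (U : Finset S) (A B : Matrix S S ℝ)
    (hA : ∀ i j, A i j = if j ∈ U then P i j else 0)
    (hB : ∀ i j, B i j = if j ∉ U then P i j else 0)
    (z : ℝ) :
    (∀ n : ℕ, 1 ≤ n →
      (fun i : S => ∑ k ∈ Finset.range (n + 1), occProb P U i n k * z ^ k) =
        ((B + z • A) ^ n) *ᵥ (fun _ => (1 : ℝ))) ∧
    (∀ n : ℕ, 2 ≤ n →
      (fun i : S => ∑ k ∈ Finset.range (n + 1), occProb P U i n k * z ^ k) =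
        (B + z • A) *ᵥ
          (fun i : S => ∑ k ∈ Finset.range n, occProb P U i (n - 1) k * z ^ k)) ∧
    (fun i : S => ∑ k ∈ Finset.range 2, occProb P U i 1 k * z ^ k) =
      (B + z • A) *ᵥ (fun _ => (1 : ℝ)) := by
  have hM : B + z • A = of fun i j => P i j * if j ∈ U then z else 1 := by
    ext i j
    by_cases hj : j ∈ U <;> simp [hA, hB, hj, mul_comm]
  have hF : ∀ n : ℕ, (fun i : S => ∑ k ∈ range (n + 1), occProb P U i n k * z ^ k) =
      (B + z • A) ^ n *ᵥ fun _ => 1 := by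
    intro n
    ext i
    simp only [sum_occProb_mul_pow, pathProb_mul_pow_occCount, sum_filter_apply_zero_eq_sum_cons,
      sum_pathProb_cons_eq_pow_mulVec, hM]
  refine ⟨fun n _ => hF n, fun n hn => ?_, by simpa using hF 1⟩
  obtain ⟨m, rfl⟩ : ∃ m, n = m + 1 := ⟨n - 1, by omega⟩
  rw [hF, pow_succ', ← mulVec_mulVec, Nat.add_sub_cancel, hF]

theorem stmt16 {S : Type*} [Fintype S] [DecidableEq S] [Nonempty S]
    (P : Matrix S S ℝ) (hP0 : ∀ i j, 0 ≤ P i j) (hP1 : ∀ i, ∑ j, P i j = 1)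
    (U : Finset S) (A B : Matrix S S ℝ)
    (hA : ∀ i j, A i j = if j ∈ U then P i j else 0)
    (hB : ∀ i j, B i j = if j ∉ U then P i j else 0)
    (z : ℝ) :
    (∀ n : ℕ, 1 ≤ n →
      (fun i : S => ∑ k ∈ Finset.range (n + 1), occProb P U i n k * z ^ k) =
        ((B + z • A) ^ n) *ᵥ (fun _ => (1 : ℝ))) ∧
    (∀ n : ℕ, 2 ≤ n →
      (fun i : S => ∑ k ∈ Finset.range (n + 1), occProb P U i n k * z ^ k) =
        (B + z • A) *ᵥ
          (fun i : S => ∑ k ∈ Finset.range n, occProb P U i (n - 1) k * z ^ k)) ∧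
    (fun i : S => ∑ k ∈ Finset.range 2, occProb P U i 1 k * z ^ k) =
      (B + z • A) *ᵥ (fun _ => (1 : ℝ)) :=
  stmt16_general P U A B hA hB z
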